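/- Every 1-Sperner hypergraph is equilizable: if H = (V, E) is a hypergraph such that every two distinct hyperedges e, f ∈ E satisfy min(|e \ f|, |f \ e|) = 1, then there exist a weight function w : V → ℕ and a threshold t ∈ ℕ such that for every subset X ⊆ V, ∑_{v ∈ X} w(v) = t if and only if X ∈ E. -/

import Mathlib

/-!
A 1-Sperner family `E` with a nonempty hyperedge has a vertex `z` and a set `A ∌ z` such that
every hyperedge through `z` lies in `insert z A` and every hyperedge avoiding `z` contains `A`:
take `f` of minimum size, `g` of maximum size among the others, and `z ∈ f \ g`. Then `E` is
glued from the 1-Sperner families `{e \ {z} : z ∈ e ∈ E}` on `A` and `{h \ A : z ∉ h ∈ E}` on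
`V \ insert z A`, both on fewer vertices. Equilizers of the two parts combine into one of `E` by
scaling the first by a factor `K` larger than every sum of the second and giving `z` the weight
that makes the two kinds of hyperedges reach the same threshold.
-/

open Finset

/-- A hypergraph with hyperedge set `E` is 1-Sperner if every two distinct
hyperedges `e, f` satisfy `min |e \ f| |f \ e| = 1`. -/
def OneSperner {α : Type*} [DecidableEq α] (E : Finset (Finset α)) : Prop :=
  ∀ e ∈ E, ∀ f ∈ E, e ≠ f → min (e \ f).card (f \ e).card = 1

section

theorem Nat.mul_add_eq_mul_add_iff {K x y r s : ℕ} (hr : r < K) (hs : s < K) :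
    K * x + r = K * y + s ↔ x = y ∧ r = s := by
  refine ⟨fun h => ⟨?_, ?_⟩, by rintro ⟨rfl, rfl⟩; rfl⟩
  · simpa [Nat.mul_add_div (by omega : 0 < K), Nat.div_eq_of_lt, hr, hs] using congrArg (· / K) h
  · simpa [Nat.mul_add_mod, Nat.mod_eq_of_lt, hr, hs] using congrArg (· % K) h

namespace Finset

variable {ι : Type*} {s t : Finset ι} {w : ι → ℕ}

theorem sum_eq_zero_iff_of_pos (hw : ∀ v ∈ s, 0 < w v) : ∑ v ∈ s, w v = 0 ↔ s = ∅ := by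
  rw [sum_eq_zero_iff, eq_empty_iff_forall_notMem]
  exact ⟨fun h v hv => (hw v hv).ne' (h v hv), fun h v hv => absurd hv (h v)⟩

theorem sum_eq_sum_iff_of_pos_of_subset (hw : ∀ v ∈ t, 0 < w v) (hst : s ⊆ t) :
    ∑ v ∈ s, w v = ∑ v ∈ t, w v ↔ s = t := by
  refine ⟨fun h => ?_, by rintro rfl; rfl⟩
  by_contra hne
  obtain ⟨i, hit, his⟩ := exists_of_ssubset (hst.ssubset_of_ne hne)
  exact (sum_lt_sum_of_subset hst hit his (hw i hit) fun _ _ _ => Nat.zero_le _).ne h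

variable [DecidableEq ι]

theorem erase_subset_of_card_sdiff_le_one {e f : Finset ι} {z : ι} (h : (e \ f).card ≤ 1)
    (hze : z ∈ e) (hzf : z ∉ f) : e.erase z ⊆ f := by
  intro x hx
  by_contra hxf
  exact ne_of_mem_erase hx <|
    card_le_one.1 h x (mem_sdiff.2 ⟨mem_of_mem_erase hx, hxf⟩) z (mem_sdiff.2 ⟨hze, hzf⟩)

end Finset

variable {α : Type*} [DecidableEq α]

theorem mem_iff_memberSubfamily_nonMemberSubfamily {E : Finset (Finset α)} {z : α}
    {A : Finset α} (hsep : ∀ h ∈ E, z ∉ h → A ⊆ h) (X : Finset α) :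
    X ∈ E ↔ (z ∈ X ∧ X.erase z ∈ E.memberSubfamily z) ∨
      (z ∉ X ∧ A ⊆ X ∧ X \ A ∈ (E.nonMemberSubfamily z).image (· \ A)) := by
  constructor
  · intro hX
    by_cases hz : z ∈ X
    · exact .inl ⟨hz, mem_memberSubfamily.2 ⟨by rwa [insert_erase hz], notMem_erase z X⟩⟩
    · exact .inr ⟨hz, hsep X hX hz, mem_image_of_mem _ (mem_nonMemberSubfamily.2 ⟨hX, hz⟩)⟩
  · rintro (⟨hz, hX⟩ | ⟨-, hAX, hX⟩)
    · rw [← insert_erase hz]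
      exact (mem_memberSubfamily.1 hX).1
    · obtain ⟨h, hh, hXh⟩ := mem_image.1 hX
      rw [mem_nonMemberSubfamily] at hh
      rw [← sdiff_union_of_subset hAX, ← hXh, sdiff_union_of_subset (hsep h hh.1 hh.2)]
      exact hh.1

namespace OneSperner

variable {E : Finset (Finset α)}

theorem mono {F : Finset (Finset α)} (hS : OneSperner E) (hF : F ⊆ E) : OneSperner F :=
  fun e he f hf => hS e (hF he) f (hF hf)

theorem image_sdiff (hS : OneSperner E) {C : Finset α} (hC : ∀ e ∈ E, C ⊆ e) :
    OneSperner (E.image (· \ C)) := by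
  simp only [OneSperner, forall_mem_image]
  intro e he f hf hne
  rw [sdiff_sdiff_sdiff_cancel_right (hC f hf), sdiff_sdiff_sdiff_cancel_right (hC e he)]
  exact hS e he f hf (by rintro rfl; exact hne rfl)

theorem memberSubfamily (hS : OneSperner E) (z : α) : OneSperner (E.memberSubfamily z) := by
  simpa only [Finset.memberSubfamily, erase_eq] using
    (hS.mono (filter_subset _ E)).image_sdiff (C := {z}) fun e he => by
      simpa using (mem_filter.1 he).2

theorem nonMemberSubfamily (hS : OneSperner E) (z : α) : OneSperner (E.nonMemberSubfamily z) :=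
  hS.mono (filter_subset _ E)

theorem sdiff_nonempty (hS : OneSperner E) {e f : Finset α} (he : e ∈ E) (hf : f ∈ E)
    (hne : e ≠ f) : (e \ f).Nonempty := by
  have := hS e he f hf hne
  rw [← card_pos]
  omega

theorem erase_subset_of_card_le {e f : Finset α} (hS : OneSperner E) (he : e ∈ E) (hf : f ∈ E)
    (hef : e.card ≤ f.card) {z : α} (hze : z ∈ e) (hzf : z ∉ f) : e.erase z ⊆ f := by
  refine erase_subset_of_card_sdiff_le_one ?_ hze hzf
  have := hS e he f hf (by rintro rfl; exact hzf hze)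
  have := card_sdiff_le_card_sdiff_iff.2 hef
  omega


theorem erase_subset_of_isMin_of_isMax (hS : OneSperner E) {f g : Finset α} (hf : f ∈ E)
    (hg : g ∈ E) (hfmin : ∀ e ∈ E, f.card ≤ e.card) (hgmax : ∀ e ∈ E, e ≠ f → e.card ≤ g.card)
    {z : α} (hzf : z ∈ f) (hzg : z ∉ g) :
    ∀ e ∈ E, z ∈ e → ∀ h ∈ E, z ∉ h → e.erase z ⊆ h := by
  have into_g : ∀ e ∈ E, z ∈ e → e.erase z ⊆ g := fun e he hze => by
    refine hS.erase_subset_of_card_le he hg ?_ hze hzg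
    rcases eq_or_ne e f with rfl | hef
    exacts [hfmin g hg, hgmax e he hef]
  have from_f : ∀ h ∈ E, z ∉ h → f.erase z ⊆ h := fun h hh hzh =>
    hS.erase_subset_of_card_le hf hh (hfmin h hh) hzf hzh
  intro e he hze h hh hzh x hx
  by_contra hxh
  have hef : e ≠ f := by rintro rfl; exact hxh (from_f h hh hzh hx)
  have hhg : h ≠ g := by rintro rfl; exact hxh (into_g e he hze hx)
  have hhe : (h \ e).card ≤ 1 := by
    have := hS e he h hh (by rintro rfl; exact hzh hze)
    have : 1 < (e \ h).card := one_lt_card.2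
      ⟨x, mem_sdiff.2 ⟨mem_of_mem_erase hx, hxh⟩, z, mem_sdiff.2 ⟨hze, hzh⟩, ne_of_mem_erase hx⟩
    omega
  obtain ⟨y, hyf, hye⟩ : ∃ y ∈ f.erase z, y ∉ e := by
    obtain ⟨y, hy⟩ := hS.sdiff_nonempty hf he hef.symm
    rw [mem_sdiff] at hy
    exact ⟨y, mem_erase.2 ⟨by rintro rfl; exact hy.2 hze, hy.1⟩, hy.2⟩
  obtain ⟨u, hu⟩ := hS.sdiff_nonempty hh hg hhg
  rw [mem_sdiff] at hu
  have hue : u ∈ e := by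
    by_contra hue
    have huy := card_le_one.1 hhe u (mem_sdiff.2 ⟨hu.1, hue⟩) y
      (mem_sdiff.2 ⟨from_f h hh hzh hyf, hye⟩)
    exact hu.2 (huy ▸ into_g f hf hzf hyf)
  exact hu.2 (into_g e he hze (mem_erase.2 ⟨by rintro rfl; exact hzh hu.1, hue⟩))

theorem exists_pivot (hS : OneSperner E) (hne : ∃ e ∈ E, e.Nonempty) :
    ∃ z, (∃ e ∈ E, z ∈ e) ∧ ∀ e ∈ E, z ∈ e → ∀ h ∈ E, z ∉ h → e.erase z ⊆ h := by
  by_cases hcard : E.card ≤ 1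
  · obtain ⟨e, he, z, hz⟩ := hne
    exact ⟨z, ⟨e, he, hz⟩, fun e he hze h hh hzh =>
      absurd (card_le_one.1 hcard e he h hh ▸ hze) hzh⟩
  obtain ⟨f, hf, hfmin⟩ := E.exists_min_image card (card_pos.1 (by omega))
  obtain ⟨g, hg, hgmax⟩ :=
    (E.erase f).exists_max_image card (card_pos.1 (by rw [card_erase_of_mem hf]; omega))
  obtain ⟨z, hz⟩ := hS.sdiff_nonempty hf (mem_of_mem_erase hg) (ne_of_mem_erase hg).symm
  rw [mem_sdiff] at hz
  exact ⟨z, ⟨f, hf, hz.1⟩, hS.erase_subset_of_isMin_of_isMax hf (mem_of_mem_erase hg) hfmin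
    (fun e he hef => hgmax e (mem_erase.2 ⟨hef, he⟩)) hz.1 hz.2⟩

theorem exists_separator {V : Finset α} (hE : ∀ e ∈ E, e ⊆ V) (hS : OneSperner E)
    (hne : ∃ e ∈ E, e.Nonempty) :
    ∃ z, ∃ A ⊆ V.erase z, (∃ e ∈ E, z ∈ e) ∧
      (∀ e ∈ E, z ∈ e → e.erase z ⊆ A) ∧ ∀ h ∈ E, z ∉ h → A ⊆ h := by
  obtain ⟨z, hz, hpivot⟩ := hS.exists_pivot hne
  refine ⟨z, (E.filter (z ∈ ·)).sup (·.erase z), ?_, hz, fun e he hze => ?_, fun h hh hzh => ?_⟩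
  · exact Finset.sup_le fun e he => erase_subset_erase z (hE e (mem_filter.1 he).1)
  · exact le_sup (f := (·.erase z)) (mem_filter.2 ⟨he, hze⟩ : e ∈ E.filter (z ∈ ·))
  · exact Finset.sup_le fun e he => hpivot e (mem_filter.1 he).1 (mem_filter.1 he).2 h hh hzh

theorem not_mem_memberSubfamily_and_mem_image_nonMemberSubfamily (hS : OneSperner E) {z : α}
    {A : Finset α} (hzA : z ∉ A) (hsep : ∀ h ∈ E, z ∉ h → A ⊆ h) :
    ¬ (A ∈ E.memberSubfamily z ∧ ∅ ∈ (E.nonMemberSubfamily z).image (· \ A)) := by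
  rintro ⟨hA₁, hA₂⟩
  have hzA_mem : insert z A ∈ E := (mem_memberSubfamily.1 hA₁).1
  have hA_mem : A ∈ E := (mem_iff_memberSubfamily_nonMemberSubfamily hsep A).2
    (.inr ⟨hzA, subset_rfl, by rwa [sdiff_self]⟩)
  obtain ⟨x, hx⟩ := hS.sdiff_nonempty hA_mem hzA_mem (fun h => hzA (h ▸ mem_insert_self z A))
  rw [mem_sdiff] at hx
  exact hx.2 (mem_insert_of_mem hx.1)

end OneSperner

-- Positive weights make the extremal sums `0` and `∑ v ∈ V, w v` attained only by `∅` and `V`,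
-- which the gluing step needs from both parts.
def IsPosEquilizer (V : Finset α) (E : Finset (Finset α)) (w : α → ℕ) (t : ℕ) : Prop :=
  (∀ v ∈ V, 0 < w v) ∧ ∀ X ⊆ V, (∑ v ∈ X, w v = t ↔ X ∈ E)

theorem exists_isPosEquilizer_of_subset_singleton_empty (V : Finset α) {E : Finset (Finset α)}
    (hE : E ⊆ {∅}) : ∃ w t, IsPosEquilizer V E w t := by
  refine ⟨fun _ => 1, if ∅ ∈ E then 0 else V.card + 1, fun _ _ => one_pos, fun X hXV => ?_⟩
  have hX : X ∈ E ↔ X = ∅ ∧ ∅ ∈ E :=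
    ⟨fun h => ⟨mem_singleton.1 (hE h), mem_singleton.1 (hE h) ▸ h⟩, fun ⟨hX, h⟩ => hX ▸ h⟩
  rw [hX, ← card_eq_zero, card_eq_sum_ones]
  have := card_le_card hXV
  split_ifs <;> simp_all
  omega

def glueWeight (z : α) (D : ℕ) (A : Finset α) (K : ℕ) (w₁ w₂ : α → ℕ) : α → ℕ :=
  fun v => if v = z then D else if v ∈ A then K * w₁ v else w₂ v

section Glue

variable {z : α} {D K : ℕ} {A B : Finset α} {E₁ E₂ : Finset (Finset α)} {w₁ w₂ : α → ℕ}
  {t₁ t₂ : ℕ}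

theorem glueWeight_self : glueWeight z D A K w₁ w₂ z = D := if_pos rfl

theorem sum_glueWeight_of_notMem {Y : Finset α} (hzY : z ∉ Y) :
    ∑ v ∈ Y, glueWeight z D A K w₁ w₂ v = K * ∑ v ∈ Y ∩ A, w₁ v + ∑ v ∈ Y \ A, w₂ v := by
  rw [← sum_inter_add_sum_sdiff Y A, mul_sum]
  congr 1 <;> refine sum_congr rfl fun v hv => ?_
  · rw [mem_inter] at hv
    simp [glueWeight, hv.2, show v ≠ z by rintro rfl; exact hzY hv.1]
  · rw [mem_sdiff] at hv
    simp [glueWeight, hv.2, show v ≠ z by rintro rfl; exact hzY hv.1]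

theorem sum_glueWeight_eq_iff_of_notMem (h₁ : IsPosEquilizer A E₁ w₁ t₁)
    (h₂ : IsPosEquilizer B E₂ w₂ t₂) (hK : ∑ v ∈ B, w₂ v + t₂ < K) {X : Finset α}
    (hzX : z ∉ X) (hXB : X \ A ⊆ B) :
    ∑ v ∈ X, glueWeight z D A K w₁ w₂ v = K * ∑ v ∈ A, w₁ v + t₂ ↔ A ⊆ X ∧ X \ A ∈ E₂ := by
  have := sum_le_sum_of_subset (f := w₂) hXB
  rw [sum_glueWeight_of_notMem hzX, Nat.mul_add_eq_mul_add_iff (by omega) (by omega),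
    sum_eq_sum_iff_of_pos_of_subset h₁.1 inter_subset_right, inter_eq_right, h₂.2 _ hXB]

theorem sum_glueWeight_eq_iff_of_mem (h₁ : IsPosEquilizer A E₁ w₁ t₁)
    (h₂ : IsPosEquilizer B E₂ w₂ t₂) (hK : ∑ v ∈ B, w₂ v + t₂ < K) (hE₁ : ∀ e ∈ E₁, e ⊆ A)
    (ht₁ : t₁ ≤ ∑ v ∈ A, w₁ v) {X : Finset α} (hzX : z ∈ X) (hXB : X.erase z \ A ⊆ B) :
    ∑ v ∈ X, glueWeight z (K * (∑ v ∈ A, w₁ v - t₁) + t₂) A K w₁ w₂ v =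
      K * ∑ v ∈ A, w₁ v + t₂ ↔ X.erase z ∈ E₁ := by
  set Y := X.erase z
  have := sum_le_sum_of_subset (f := w₂) hXB
  rw [← add_sum_erase X _ hzX, sum_glueWeight_of_notMem (notMem_erase z X)]
  rw [show glueWeight z (K * (∑ v ∈ A, w₁ v - t₁) + t₂) A K w₁ w₂ z +
        (K * ∑ v ∈ Y ∩ A, w₁ v + ∑ v ∈ Y \ A, w₂ v) =
      K * (∑ v ∈ A, w₁ v - t₁ + ∑ v ∈ Y ∩ A, w₁ v) + (∑ v ∈ Y \ A, w₂ v + t₂) by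
        rw [glueWeight_self]; ring,
    Nat.mul_add_eq_mul_add_iff (by omega) (by omega),
    show ∑ v ∈ A, w₁ v - t₁ + ∑ v ∈ Y ∩ A, w₁ v = ∑ v ∈ A, w₁ v ↔ ∑ v ∈ Y ∩ A, w₁ v = t₁ by omega,
    add_eq_right, sum_eq_zero_iff_of_pos fun v hv => h₂.1 v (hXB hv), sdiff_eq_empty_iff_subset]
  constructor
  · rintro ⟨hY, hYA⟩
    rwa [inter_eq_left.2 hYA, h₁.2 Y hYA] at hY
  · intro hY
    have hYA := hE₁ Y hY
    rw [inter_eq_left.2 hYA]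
    exact ⟨(h₁.2 Y hYA).2 hY, hYA⟩

end Glue

theorem IsPosEquilizer.glue {V A : Finset α} {z : α} {E E₁ E₂ : Finset (Finset α)}
    {w₁ w₂ : α → ℕ} {t₁ t₂ : ℕ} (h₁ : IsPosEquilizer A E₁ w₁ t₁)
    (h₂ : IsPosEquilizer (V \ insert z A) E₂ w₂ t₂) (hE₁ : ∀ e ∈ E₁, e ⊆ A)
    (hE₁ne : E₁.Nonempty) (hanti : ¬ (A ∈ E₁ ∧ ∅ ∈ E₂))
    (hE : ∀ X ⊆ V, X ∈ E ↔ (z ∈ X ∧ X.erase z ∈ E₁) ∨ (z ∉ X ∧ A ⊆ X ∧ X \ A ∈ E₂)) :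
    ∃ w t, IsPosEquilizer V E w t := by
  set T := ∑ v ∈ A, w₁ v
  set K := ∑ v ∈ V \ insert z A, w₂ v + t₂ + 1
  have ht₁ : t₁ ≤ T := by
    obtain ⟨e, he⟩ := hE₁ne
    rw [← (h₁.2 e (hE₁ e he)).2 he]
    exact sum_le_sum_of_subset (hE₁ e he)
  -- the weight of `z` vanishes only if both `A` and `insert z A` are hyperedges
  have hD : 0 < K * (T - t₁) + t₂ := by
    by_contra! hD0
    obtain ⟨hT, ht₂⟩ : T - t₁ = 0 ∧ t₂ = 0 := by simpa [show K ≠ 0 by omega] using hD0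
    exact hanti ⟨(h₁.2 A subset_rfl).1 (by omega), (h₂.2 ∅ (empty_subset _)).1 (by simp [ht₂])⟩
  have hsdiff : ∀ Y ⊆ V, z ∉ Y → Y \ A ⊆ V \ insert z A := fun Y hYV hzY v hv => by
    rw [mem_sdiff] at hv ⊢
    exact ⟨hYV hv.1, by grind⟩
  refine ⟨glueWeight z (K * (T - t₁) + t₂) A K w₁ w₂, K * T + t₂, fun v hv => ?_, fun X hXV => ?_⟩
  · by_cases hvz : v = z
    · simpa [glueWeight, hvz] using hD
    by_cases hvA : v ∈ A
    · simpa [glueWeight, hvz, hvA, show 0 < K by omega] using h₁.1 v hvA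
    · simpa [glueWeight, hvz, hvA] using h₂.1 v (by simp [hv, hvz, hvA])
  rw [hE X hXV]
  by_cases hzX : z ∈ X
  · simpa [hzX] using sum_glueWeight_eq_iff_of_mem h₁ h₂ (Nat.lt_succ_self _) hE₁ ht₁ hzX
      (hsdiff _ ((erase_subset z X).trans hXV) (notMem_erase z X))
  · simpa [hzX] using sum_glueWeight_eq_iff_of_notMem h₁ h₂ (Nat.lt_succ_self _) hzX
      (hsdiff X hXV hzX)

theorem OneSperner.exists_isPosEquilizer (V : Finset α) {E : Finset (Finset α)}
    (hE : ∀ e ∈ E, e ⊆ V) (hS : OneSperner E) : ∃ w t, IsPosEquilizer V E w t := by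
  induction V using Finset.strongInduction generalizing E with | H V ih =>
  by_cases hne : ∃ e ∈ E, e.Nonempty
  swap
  · push Not at hne
    exact exists_isPosEquilizer_of_subset_singleton_empty V fun e he => mem_singleton.2 (hne e he)
  obtain ⟨z, A, hAV, ⟨e, he, hze⟩, hlink, hsep⟩ := hS.exists_separator hE hne
  have hzV : z ∈ V := hE e he hze
  have hzA : z ∉ A := fun h => notMem_erase z V (hAV h)
  have hE₁ : ∀ Y ∈ E.memberSubfamily z, Y ⊆ A := fun Y hY => by
    obtain ⟨hY, hzY⟩ := mem_memberSubfamily.1 hY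
    simpa [erase_insert hzY] using hlink _ hY (mem_insert_self z Y)
  have hE₂ : ∀ Y ∈ (E.nonMemberSubfamily z).image (· \ A), Y ⊆ V \ insert z A := by
    simp only [forall_mem_image, mem_nonMemberSubfamily]
    intro h ⟨hh, hzh⟩ v hv
    simp only [mem_sdiff, mem_insert, not_or] at hv ⊢
    exact ⟨hE h hh hv.1, fun hvz => hzh (hvz ▸ hv.1), hv.2⟩
  obtain ⟨w₁, t₁, h₁⟩ := ih A (hAV.trans_ssubset (erase_ssubset hzV)) hE₁
    (hS.memberSubfamily z)
  obtain ⟨w₂, t₂, h₂⟩ := ih _ (sdiff_ssubset (insert_subset hzV (hAV.trans (erase_subset z V)))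
    (insert_nonempty z A)) hE₂ ((hS.nonMemberSubfamily z).image_sdiff fun h hh =>
      hsep h (mem_nonMemberSubfamily.1 hh).1 (mem_nonMemberSubfamily.1 hh).2)
  exact h₁.glue h₂ hE₁ ⟨_, mem_memberSubfamily.2 ⟨by rwa [insert_erase hze], notMem_erase z e⟩⟩
    (hS.not_mem_memberSubfamily_and_mem_image_nonMemberSubfamily hzA hsep)
    fun X _ => mem_iff_memberSubfamily_nonMemberSubfamily hsep X

end

theorem stmt_9 {α : Type*} [DecidableEq α] (V : Finset α) (E : Finset (Finset α))
    (hE : ∀ e ∈ E, e ⊆ V) (h : OneSperner E) :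
    ∃ w : α → ℕ, ∃ t : ℕ, ∀ X ⊆ V, ((∑ v ∈ X, w v) = t ↔ X ∈ E) := by
  obtain ⟨w, t, -, hw⟩ := h.exists_isPosEquilizer V hE
  exact ⟨w, t, hw⟩
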